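/- The gap between the expected Bregman divergence of labels from predictions and the proper calibration error equals the expected drop of F under conditioning: E[D_F(Y, g(X))] − CE_F(g) = E[F(Y)] − E[F(E[Y|g(X)])]. -/

import Mathlib

open MeasureTheory ProbabilityTheory
open scoped RealInnerProductSpace

/-- Bregman divergence generated by `F`. -/
noncomputable def breg {k : ℕ} (F : EuclideanSpace ℝ (Fin k) → ℝ)
    (p q : EuclideanSpace ℝ (Fin k)) : ℝ :=
  F p - F q - ⟪gradient F q, p - q⟫

/-- The probability simplex in `ℝ^k`. -/
def simplexE (k : ℕ) : Set (EuclideanSpace ℝ (Fin k)) :=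
  {p | (∀ i, 0 ≤ p i) ∧ ∑ i, p i = 1}

/-!
With `q = g ∘ X` and `Z = E[Y | q]`, pointwise
`D_F(Y, q) - D_F(Z, q) = F(Y) - F(Z) - ⟪∇F(q), Y - Z⟫`.
The vector `∇F(q)` is bounded and `σ(q)`-measurable, so by the pull-out property the inner product
has the same expectation as `⟪∇F(q), E[Y - Z | q]⟫`, which vanishes. All integrals are finite
because `Y`, `q` and (the simplex being closed and convex) `Z` take values in the compact simplex,
on which `F` and `∇F` are continuous.
-/

lemma simplexE_eq_preimage_stdSimplex (k : ℕ) :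
    simplexE k = WithLp.ofLp ⁻¹' stdSimplex ℝ (Fin k) := rfl

lemma isCompact_simplexE (k : ℕ) : IsCompact (simplexE k) := by
  rw [simplexE_eq_preimage_stdSimplex]
  exact (EuclideanSpace.equiv (Fin k) ℝ).toHomeomorph.isCompact_preimage.2
    (isCompact_stdSimplex ℝ (Fin k))

lemma convex_simplexE (k : ℕ) : Convex ℝ (simplexE k) :=
  (convex_stdSimplex ℝ (Fin k)).linear_preimage (EuclideanSpace.equiv (Fin k) ℝ).toLinearMap

lemma single_one_mem_simplexE {k : ℕ} (i : Fin k) :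
    EuclideanSpace.single i (1 : ℝ) ∈ simplexE k := by
  rw [simplexE_eq_preimage_stdSimplex, Set.mem_preimage, PiLp.ofLp_single]
  exact single_mem_stdSimplex ℝ i

section

variable {Ω α β : Type*} [MeasurableSpace Ω] {μ : Measure Ω} [IsFiniteMeasure μ]
  [TopologicalSpace α] [T2Space α] [MeasurableSpace α] [OpensMeasurableSpace α]
  [NormedAddCommGroup β]

lemma integrable_comp_of_ae_mem_isCompact {f : α → β} {K : Set α} (hK : IsCompact K)
    (hf : ContinuousOn f K) {W : Ω → α} (hW : AEMeasurable W μ) (hWK : ∀ᵐ ω ∂μ, W ω ∈ K) :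
    Integrable (fun ω ↦ f (W ω)) μ := by
  have hconc : (μ.map W).restrict K = μ.map W :=
    Measure.restrict_eq_self_of_ae_mem ((ae_map_iff hW hK.measurableSet).2 hWK)
  have hfK : Integrable f (μ.map W) := hconc ▸ hf.integrableOn_compact hK
  exact hfK.comp_aemeasurable hW

end

lemma ContinuousOn.measurable_comp_of_forall_mem {Ω α β : Type*} {mΩ : MeasurableSpace Ω}
    [TopologicalSpace α] [MeasurableSpace α] [OpensMeasurableSpace α]
    [TopologicalSpace β] [MeasurableSpace β] [BorelSpace β]
    {f : α → β} {K : Set α} (hf : ContinuousOn f K) {q : Ω → α} (hq : Measurable q)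
    (hqK : ∀ ω, q ω ∈ K) : Measurable (fun ω ↦ f (q ω)) :=
  (continuousOn_iff_continuous_domRestrict.1 hf).measurable.comp (hq.subtype_mk (h := hqK))

section

variable {Ω E : Type*} {m mΩ : MeasurableSpace Ω} {μ : Measure Ω} [IsFiniteMeasure μ]
  [NormedAddCommGroup E] [InnerProductSpace ℝ E] [CompleteSpace E]

lemma integral_inner_sub_condExp_eq_zero (hm : m ≤ mΩ) {V Y : Ω → E}
    (hV : StronglyMeasurable[m] V) {C : ℝ} (hVC : ∀ᵐ ω ∂μ, ‖V ω‖ ≤ C) (hY : Integrable Y μ) :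
    ∫ ω, ⟪V ω, Y ω - μ[Y | m] ω⟫ ∂μ = 0 := by
  have hcentred : μ[Y - μ[Y | m] | m] =ᵐ[μ] 0 := by
    filter_upwards [condExp_sub hY integrable_condExp m] with ω hω
    rw [hω, condExp_of_stronglyMeasurable hm stronglyMeasurable_condExp integrable_condExp,
      sub_self, Pi.zero_apply]
  calc ∫ ω, ⟪V ω, Y ω - μ[Y | m] ω⟫ ∂μ
      = ∫ ω, μ[fun ω ↦ innerSL ℝ (V ω) ((Y - μ[Y | m]) ω) | m] ω ∂μ :=
        (integral_condExp hm).symm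
    _ = ∫ ω, innerSL ℝ (V ω) (μ[Y - μ[Y | m] | m] ω) ∂μ := integral_congr_ae
        (condExp_stronglyMeasurable_bilin_of_bound (innerSL ℝ) hm hV
          (hY.sub integrable_condExp) C hVC)
    _ = 0 := integral_eq_zero_of_ae <| by
        filter_upwards [hcentred] with ω hω
        rw [hω, Pi.zero_apply, map_zero, Pi.zero_apply]

end

section

variable {k : ℕ} (F : EuclideanSpace ℝ (Fin k) → ℝ)

lemma breg_sub_breg (p r q : EuclideanSpace ℝ (Fin k)) :
    breg F p q - breg F r q = F p - F r - ⟪gradient F q, p - r⟫ := by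
  simp only [breg, inner_sub_right]
  ring

variable {F} {Ω : Type*} [MeasurableSpace Ω] {μ : Measure Ω} [IsFiniteMeasure μ]

lemma integrable_breg {K : Set (EuclideanSpace ℝ (Fin k))} (hK : IsCompact K)
    (hFK : ContinuousOn F K) (hgFK : ContinuousOn (gradient F) K)
    {p q : Ω → EuclideanSpace ℝ (Fin k)} (hp : AEMeasurable p μ) (hq : AEMeasurable q μ)
    (hpK : ∀ᵐ ω ∂μ, p ω ∈ K) (hqK : ∀ᵐ ω ∂μ, q ω ∈ K) :
    Integrable (fun ω ↦ breg F (p ω) (q ω)) μ := by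
  have hbreg : ContinuousOn (fun x ↦ breg F x.1 x.2) (K ×ˢ K) :=
    ((hFK.comp continuousOn_fst fun _ hx ↦ hx.1).sub
      (hFK.comp continuousOn_snd fun _ hx ↦ hx.2)).sub
      ((hgFK.comp continuousOn_snd fun _ hx ↦ hx.2).inner (continuousOn_fst.sub continuousOn_snd))
  refine integrable_comp_of_ae_mem_isCompact (hK.prod hK) hbreg (hp.prodMk hq) ?_
  filter_upwards [hpK, hqK] with ω hpω hqω using ⟨hpω, hqω⟩

lemma integral_breg_sub_integral_breg {K : Set (EuclideanSpace ℝ (Fin k))} (hK : IsCompact K)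
    (hFK : ContinuousOn F K) (hgFK : ContinuousOn (gradient F) K)
    {p r q : Ω → EuclideanSpace ℝ (Fin k)} (hp : AEMeasurable p μ) (hr : AEMeasurable r μ)
    (hq : AEMeasurable q μ) (hpK : ∀ᵐ ω ∂μ, p ω ∈ K) (hrK : ∀ᵐ ω ∂μ, r ω ∈ K)
    (hqK : ∀ᵐ ω ∂μ, q ω ∈ K) :
    (∫ ω, breg F (p ω) (q ω) ∂μ) - ∫ ω, breg F (r ω) (q ω) ∂μ
      = (∫ ω, F (p ω) ∂μ) - (∫ ω, F (r ω) ∂μ) - ∫ ω, ⟪gradient F (q ω), p ω - r ω⟫ ∂μ := by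
  have hbp := integrable_breg hK hFK hgFK hp hq hpK hqK
  have hbr := integrable_breg hK hFK hgFK hr hq hrK hqK
  have hFp := integrable_comp_of_ae_mem_isCompact hK hFK hp hpK
  have hFr := integrable_comp_of_ae_mem_isCompact hK hFK hr hrK
  have hinner : Integrable (fun ω ↦ ⟪gradient F (q ω), p ω - r ω⟫) μ :=
    ((hFp.sub hFr).sub (hbp.sub hbr)).congr <| ae_of_all _ fun ω ↦ by
      simp only [Pi.sub_apply, breg_sub_breg, sub_sub_cancel]
  rw [← integral_sub hbp hbr, ← integral_sub hFp hFr,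
    ← integral_sub (f := fun ω ↦ F (p ω) - F (r ω)) (hFp.sub hFr) hinner]
  simp only [breg_sub_breg]

end

theorem bregman_gap_eq_expected_drop_general
    {Ω 𝒳 : Type*} [MeasurableSpace Ω] [MeasurableSpace 𝒳]
    (μ : Measure Ω) [IsProbabilityMeasure μ] {k : ℕ}
    (X : Ω → 𝒳) (Y : Ω → EuclideanSpace ℝ (Fin k))
    (g : 𝒳 → EuclideanSpace ℝ (Fin k))
    (F : EuclideanSpace ℝ (Fin k) → ℝ)
    (hX : Measurable X) (hY : Measurable Y) (hg : Measurable g)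
    (hYoh : ∀ ω, ∃ i, Y ω = EuclideanSpace.single i 1)
    (hgs : ∀ x, g x ∈ simplexE k)
    (hFc : ContinuousOn F (simplexE k))
    (hgFc : ContinuousOn (gradient F) (simplexE k)) :
    (∫ ω, breg F (Y ω) (g (X ω)) ∂μ)
      - (∫ ω, breg F
            ((μ[Y | MeasurableSpace.comap (fun ω' => g (X ω')) inferInstance]) ω)
            (g (X ω)) ∂μ)
      = (∫ ω, F (Y ω) ∂μ)
        - ∫ ω, F ((μ[Y | MeasurableSpace.comap (fun ω' => g (X ω')) inferInstance]) ω) ∂μ := by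
  have hm : MeasurableSpace.comap (fun ω' => g (X ω')) inferInstance ≤ ‹MeasurableSpace Ω› :=
    (hg.comp hX).comap_le
  set Z := μ[Y | MeasurableSpace.comap (fun ω' => g (X ω')) inferInstance]
  have hK := isCompact_simplexE k
  have hYK : ∀ ω, Y ω ∈ simplexE k := fun ω ↦ (hYoh ω).choose_spec ▸ single_one_mem_simplexE _
  have hYint : Integrable Y μ :=
    integrable_comp_of_ae_mem_isCompact hK continuousOn_id hY.aemeasurable (ae_of_all _ hYK)
  have hZK : ∀ᵐ ω ∂μ, Z ω ∈ simplexE k :=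
    (convex_simplexE k).condExp_mem hm hYint hK.isClosed (ae_of_all _ hYK)
  have hV : StronglyMeasurable[MeasurableSpace.comap (fun ω' => g (X ω')) inferInstance]
      (fun ω ↦ gradient F (g (X ω))) :=
    (hgFc.measurable_comp_of_forall_mem (comap_measurable _) fun ω ↦ hgs _).stronglyMeasurable
  obtain ⟨C, hC⟩ := hK.exists_bound_of_continuousOn hgFc
  rw [integral_breg_sub_integral_breg (q := fun ω ↦ g (X ω)) hK hFc hgFc hY.aemeasurable
      (stronglyMeasurable_condExp.mono hm).measurable.aemeasurable (hg.comp hX).aemeasurable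
      (ae_of_all _ hYK) hZK (ae_of_all _ fun ω ↦ hgs _),
    integral_inner_sub_condExp_eq_zero hm hV (ae_of_all _ fun ω ↦ hC _ (hgs _)) hYint, sub_zero]

/-- `E[D_F(Y, g(X))] − CE_F(g) = E[F(Y)] − E[F(E[Y|g(X)])]`. -/
theorem bregman_gap_eq_expected_drop
    {Ω 𝒳 : Type*} [MeasurableSpace Ω] [MeasurableSpace 𝒳]
    (μ : Measure Ω) [IsProbabilityMeasure μ] {k : ℕ}
    (X : Ω → 𝒳) (Y : Ω → EuclideanSpace ℝ (Fin k))
    (g : 𝒳 → EuclideanSpace ℝ (Fin k))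
    (F : EuclideanSpace ℝ (Fin k) → ℝ)
    (hX : Measurable X) (hY : Measurable Y) (hg : Measurable g)
    (hYoh : ∀ ω, ∃ i, Y ω = EuclideanSpace.single i 1)
    (hgs : ∀ x, g x ∈ simplexE k)
    (U : Set (EuclideanSpace ℝ (Fin k))) (hU : IsOpen U) (hUs : simplexE k ⊆ U)
    (hF : ConvexOn ℝ Set.univ F)
    (hFd : ∀ p ∈ U, DifferentiableAt ℝ F p)
    (hFc : ContinuousOn F (simplexE k))
    (hgFc : ContinuousOn (gradient F) (simplexE k)) :
    (∫ ω, breg F (Y ω) (g (X ω)) ∂μ)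
      - (∫ ω, breg F
            ((μ[Y | MeasurableSpace.comap (fun ω' => g (X ω')) inferInstance]) ω)
            (g (X ω)) ∂μ)
      = (∫ ω, F (Y ω) ∂μ)
        - ∫ ω, F ((μ[Y | MeasurableSpace.comap (fun ω' => g (X ω')) inferInstance]) ω) ∂μ :=
  bregman_gap_eq_expected_drop_general μ X Y g F hX hY hg hYoh hgs hFc hgFc
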